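/- arXiv:1401.1361 — 4 statements merged into one kernel-verified Lean document; each statement's English description precedes it below -/
import Mathlib

section
/- For every positive integer $l$, $\left| \sum_{rs = l,\, r \le v,\, s \le v} \Lambda(r)\mu(s) \right| \le \log l$ for every real $v \ge 1$. -/
open Finset

/-- For every positive integer `l` and every real `v ≥ 1`,
`|∑_{rs = l, r ≤ v, s ≤ v} Λ(r) μ(s)| ≤ log l`. -/
theorem piV_le_log (l : ℕ) (hl : 0 < l) (v : ℝ) (hv : 1 ≤ v) :
    |∑ p ∈ l.divisorsAntidiagonal,
        if (p.1 : ℝ) ≤ v ∧ (p.2 : ℝ) ≤ v then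
          ArithmeticFunction.vonMangoldt p.1 * (ArithmeticFunction.moebius p.2 : ℝ)
        else 0| ≤ Real.log l := by
  calc |∑ p ∈ l.divisorsAntidiagonal,
        if (p.1 : ℝ) ≤ v ∧ (p.2 : ℝ) ≤ v then
          ArithmeticFunction.vonMangoldt p.1 * (ArithmeticFunction.moebius p.2 : ℝ)
        else 0|
      ≤ ∑ p ∈ l.divisorsAntidiagonal,
        |if (p.1 : ℝ) ≤ v ∧ (p.2 : ℝ) ≤ v then
          ArithmeticFunction.vonMangoldt p.1 * (ArithmeticFunction.moebius p.2 : ℝ)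
        else 0| := Finset.abs_sum_le_sum_abs _ _
    _ ≤ ∑ p ∈ l.divisorsAntidiagonal, ArithmeticFunction.vonMangoldt p.1 := by
        refine Finset.sum_le_sum fun p _ => ?_
        split_ifs with h
        · rw [abs_mul]
          have h1 : |(ArithmeticFunction.moebius p.2 : ℝ)| ≤ 1 := by
            have := ArithmeticFunction.abs_moebius_le_one (n := p.2)
            exact_mod_cast (by push_cast; exact_mod_cast this :
              |(ArithmeticFunction.moebius p.2 : ℝ)| ≤ 1)
          have h2 : |ArithmeticFunction.vonMangoldt p.1| =
              ArithmeticFunction.vonMangoldt p.1 :=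
            abs_of_nonneg ArithmeticFunction.vonMangoldt_nonneg
          calc |ArithmeticFunction.vonMangoldt p.1| * |(ArithmeticFunction.moebius p.2 : ℝ)|
              ≤ |ArithmeticFunction.vonMangoldt p.1| * 1 :=
                mul_le_mul_of_nonneg_left h1 (abs_nonneg _)
            _ = ArithmeticFunction.vonMangoldt p.1 := by rw [mul_one, h2]
        · simpa using ArithmeticFunction.vonMangoldt_nonneg
    _ = ∑ i ∈ l.divisors, ArithmeticFunction.vonMangoldt i :=
        Nat.sum_divisorsAntidiagonal (fun r s => ArithmeticFunction.vonMangoldt r)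
    _ = Real.log l := ArithmeticFunction.vonMangoldt_sum
end

section
/- Let $c \in (1, 2)$ and let $h(x) = x^c \ell(x)$ on $[x_0, \infty)$ where $\ell(x) = \exp\left(\int_{x_0}^x \vartheta(t)/t \, dt\right)$ for a smooth function $\vartheta$ satisfying $\vartheta(x) \to 0$ and $x^n \vartheta^{(n)}(x) \to 0$ as $x \to \infty$ for every $n \ge 1$. Then for every $n \ge 1$, $\lim_{x \to \infty} \frac{x^n h^{(n)}(x)}{h(x)} = c(c-1)(c-2)\cdots(c-n+1)$. -/
open Filter
open Set Topology ContDiff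

namespace RVAux

variable {s : Set ℝ} {f g : ℝ → ℝ}

lemma smooth_iter (hs : IsOpen s) (hf : ContDiffOn ℝ ∞ f s) :
    ∀ n : ℕ, ContDiffOn ℝ ∞ (iteratedDeriv n f) s := by
  intro n
  induction n with
  | zero => simpa [iteratedDeriv_zero] using hf
  | succ n ih =>
    rw [iteratedDeriv_succ]
    exact ((contDiffOn_infty_iff_deriv_of_isOpen hs).mp ih).2

lemma diffAt (hs : IsOpen s) (hf : ContDiffOn ℝ ∞ f s) {x : ℝ} (hx : x ∈ s) :
    DifferentiableAt ℝ f x :=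
  ((hf.differentiableOn (by simp)).differentiableAt (hs.mem_nhds hx))

lemma iter_zero_fun : ∀ k : ℕ, iteratedDeriv k (fun _ : ℝ => (0:ℝ)) = fun _ => 0 := by
  intro k
  induction k with
  | zero => simp [iteratedDeriv_zero]
  | succ k ih => rw [iteratedDeriv_succ', deriv_const']; exact ih

lemma iter_const (A : ℝ) {k : ℕ} (hk : 1 ≤ k) :
    iteratedDeriv k (fun _ : ℝ => A) = fun _ => 0 := by
  obtain ⟨j, rfl⟩ := Nat.exists_eq_add_of_le hk
  rw [add_comm, iteratedDeriv_succ', deriv_const']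
  exact iter_zero_fun j

lemma iter_add (hs : IsOpen s) (hf : ContDiffOn ℝ ∞ f s) (hg : ContDiffOn ℝ ∞ g s) :
    ∀ n : ℕ, ∀ x ∈ s, iteratedDeriv n (fun y => f y + g y) x
      = iteratedDeriv n f x + iteratedDeriv n g x := by
  intro n
  induction n with
  | zero => intro x hx; simp [iteratedDeriv_zero]
  | succ n ih =>
    intro x hx
    rw [iteratedDeriv_succ, iteratedDeriv_succ, iteratedDeriv_succ]
    have hev : iteratedDeriv n (fun y => f y + g y)
        =ᶠ[𝓝 x] fun y => iteratedDeriv n f y + iteratedDeriv n g y := by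
      filter_upwards [hs.mem_nhds hx] with y hy using ih y hy
    rw [hev.deriv_eq]
    exact deriv_add (diffAt hs (smooth_iter hs hf n) hx) (diffAt hs (smooth_iter hs hg n) hx)

lemma iter_xderiv (hs : IsOpen s) (hf : ContDiffOn ℝ ∞ f s) :
    ∀ k : ℕ, ∀ x ∈ s, iteratedDeriv k (fun y => y * deriv f y) x
      = x * iteratedDeriv (k+1) f x + k * iteratedDeriv k f x := by
  intro k
  induction k with
  | zero => intro x hx; simp [iteratedDeriv_zero, iteratedDeriv_one]
  | succ k ih =>
    intro x hx
    rw [iteratedDeriv_succ]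
    have hev : iteratedDeriv k (fun y => y * deriv f y)
        =ᶠ[𝓝 x] fun y => y * iteratedDeriv (k+1) f y + (k : ℝ) * iteratedDeriv k f y := by
      filter_upwards [hs.mem_nhds hx] with y hy using ih y hy
    rw [hev.deriv_eq]
    have h1 : HasDerivAt (fun y => y * iteratedDeriv (k+1) f y)
        (1 * iteratedDeriv (k+1) f x + x * iteratedDeriv (k+2) f x) x := by
      have := (hasDerivAt_id x).fun_mul ((diffAt hs (smooth_iter hs hf (k+1)) hx).hasDerivAt)
      simpa [iteratedDeriv_succ] using this
    have h2 : HasDerivAt (fun y => (k : ℝ) * iteratedDeriv k f y)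
        ((k : ℝ) * iteratedDeriv (k+1) f x) x := by
      have := ((diffAt hs (smooth_iter hs hf k) hx).hasDerivAt).const_mul (k : ℝ)
      simpa [iteratedDeriv_succ] using this
    rw [(h1.fun_add h2).deriv]
    push_cast
    ring

/-- `f` is smooth on `s` and `x^(k+m) f⁽ᵏ⁾(x)` tends to `A` for `k = 0` and to `0` otherwise. -/
def Good (s : Set ℝ) (m : ℕ) (A : ℝ) (f : ℝ → ℝ) : Prop :=
  ContDiffOn ℝ ∞ f s ∧ ∀ k : ℕ,
    Tendsto (fun x => x ^ (k + m) * iteratedDeriv k f x) atTop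
      (nhds (if k = 0 then A else 0))

lemma Good.const (A : ℝ) : Good s 0 A (fun _ => A) := by
  refine ⟨contDiffOn_const, fun k => ?_⟩
  rcases Nat.eq_zero_or_pos k with rfl | hk
  · simpa [iteratedDeriv_zero] using tendsto_const_nhds
  · simp only [iter_const A hk, if_neg hk.ne', mul_zero]
    exact tendsto_const_nhds

lemma Good.add {m : ℕ} {A B : ℝ} (hs : IsOpen s) (hmem : ∀ᶠ x in atTop, x ∈ s)
    (hf : Good s m A f) (hg : Good s m B g) :
    Good s m (A + B) (fun x => f x + g x) := by
  refine ⟨hf.1.add hg.1, fun k => ?_⟩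
  have := (hf.2 k).add (hg.2 k)
  have hlim : ((if k = 0 then A else 0) + if k = 0 then B else 0)
      = (if k = 0 then A + B else 0) := by
    rcases Nat.eq_zero_or_pos k with rfl | hk
    · simp
    · simp [hk.ne']
  rw [hlim] at this
  have heq : ∀ᶠ x in atTop, x ^ (k + m) * iteratedDeriv k f x
      + x ^ (k + m) * iteratedDeriv k g x
      = x ^ (k + m) * iteratedDeriv k (fun y => f y + g y) x := by
    filter_upwards [hmem] with x hx
    rw [iter_add hs hf.1 hg.1 k x hx]; ring
  exact this.congr' heq

lemma Good.deriv {m : ℕ} {A : ℝ} (hs : IsOpen s) (hf : Good s m A f) :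
    Good s (m + 1) 0 (_root_.deriv f) := by
  refine ⟨((contDiffOn_infty_iff_deriv_of_isOpen hs).mp hf.1).2, fun k => ?_⟩
  have := hf.2 (k + 1)
  simp only [Nat.succ_ne_zero, if_neg] at this ⊢
  have hfun : (fun x => x ^ (k + 1 + m) * iteratedDeriv (k + 1) f x)
      = fun x => x ^ (k + (m + 1)) * iteratedDeriv k (_root_.deriv f) x := by
    funext x
    rw [iteratedDeriv_succ', show k + 1 + m = k + (m + 1) by ring]
  rw [hfun] at this
  simpa using this

lemma Good.mul_aux (hs : IsOpen s) (hmem : ∀ᶠ x in atTop, x ∈ s) :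
    ∀ k m l : ℕ, ∀ A B : ℝ, ∀ f g : ℝ → ℝ, Good s m A f → Good s l B g →
      Tendsto (fun x => x ^ (k + m + l) * iteratedDeriv k (fun y => f y * g y) x) atTop
        (nhds (if k = 0 then A * B else 0)) := by
  intro k
  induction k with
  | zero =>
    intro m l A B f g hf hg
    have := (hf.2 0).mul (hg.2 0)
    simp only [if_pos rfl] at this ⊢
    refine this.congr fun x => ?_
    simp only [iteratedDeriv_zero, zero_add]
    rw [show (m + l) = 0 + m + l by ring, pow_add, pow_add]
    ring_nf
  | succ k ih =>
    intro m l A B f g hf hg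
    have hf' : Good s (m + 1) 0 (_root_.deriv f) := Good.deriv hs hf
    have hg' : Good s (l + 1) 0 (_root_.deriv g) := Good.deriv hs hg
    have t1 := ih (m + 1) l 0 B (_root_.deriv f) g hf' hg
    have t2 := ih m (l + 1) A 0 f (_root_.deriv g) hf hg'
    have t12 := t1.add t2
    have hlim : ((if k = 0 then 0 * B else 0) + if k = 0 then A * 0 else 0) = (0 : ℝ) := by
      rcases Nat.eq_zero_or_pos k with rfl | hk <;> simp
    rw [hlim] at t12
    simp only [Nat.succ_ne_zero, if_neg]
    refine t12.congr' ?_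
    filter_upwards [hmem] with x hx
    have h1 : iteratedDeriv (k + 1) (fun y => f y * g y) x
        = iteratedDeriv k (fun y => _root_.deriv f y * g y) x
          + iteratedDeriv k (fun y => f y * _root_.deriv g y) x := by
      rw [iteratedDeriv_succ']
      have heq : Set.EqOn (_root_.deriv (fun y => f y * g y))
          (fun y => _root_.deriv f y * g y + f y * _root_.deriv g y) s := by
        intro y hy
        exact deriv_mul (diffAt hs hf.1 hy) (diffAt hs hg.1 hy)
      rw [heq.iteratedDeriv_of_isOpen hs k hx]
      exact iter_add hs (((contDiffOn_infty_iff_deriv_of_isOpen hs).mp hf.1).2.mul hg.1)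
        (hf.1.mul ((contDiffOn_infty_iff_deriv_of_isOpen hs).mp hg.1).2) k x hx
    rw [h1, show k + (m + 1) + l = k + 1 + m + l by ring,
      show k + m + (l + 1) = k + 1 + m + l by ring]
    ring

lemma Good.mul {m l : ℕ} {A B : ℝ} (hs : IsOpen s) (hmem : ∀ᶠ x in atTop, x ∈ s)
    (hf : Good s m A f) (hg : Good s l B g) :
    Good s (m + l) (A * B) (fun x => f x * g x) := by
  refine ⟨hf.1.mul hg.1, fun k => ?_⟩
  have := Good.mul_aux hs hmem k m l A B f g hf hg
  rwa [show k + m + l = k + (m + l) by ring] at this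

lemma Good.xderiv {A : ℝ} (hs : IsOpen s) (hmem : ∀ᶠ x in atTop, x ∈ s)
    (hf : Good s 0 A f) :
    Good s 0 0 (fun x => x * _root_.deriv f x) := by
  have hd : ContDiffOn ℝ ∞ (_root_.deriv f) s :=
    ((contDiffOn_infty_iff_deriv_of_isOpen hs).mp hf.1).2
  refine ⟨(contDiffOn_id).mul hd, fun k => ?_⟩
  have t1 := hf.2 (k + 1)
  have t2 := (hf.2 k).const_mul (k : ℝ)
  have t12 := t1.add t2
  have hlim : ((if k + 1 = 0 then A else 0) + (k : ℝ) * (if k = 0 then A else 0)) = (0 : ℝ) := by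
    rcases Nat.eq_zero_or_pos k with rfl | hk
    · simp
    · simp [hk.ne']
  rw [hlim] at t12
  have : (if k = 0 then (0:ℝ) else 0) = 0 := by simp
  rw [this]
  refine t12.congr' ?_
  filter_upwards [hmem] with x hx
  rw [iter_xderiv hs hf.1 k x hx]
  simp only [Nat.add_zero]
  rw [pow_succ]
  ring

noncomputable def Qaux (c : ℝ) (ϑ : ℝ → ℝ) : ℕ → ℝ → ℝ
  | 0 => fun _ => 1
  | (n+1) => fun x => (c - n + ϑ x) * Qaux c ϑ n x + x * deriv (Qaux c ϑ n) x

lemma Qgood {c : ℝ} {ϑ : ℝ → ℝ} (hs : IsOpen s) (hmem : ∀ᶠ x in atTop, x ∈ s)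
    (hθ : Good s 0 0 ϑ) :
    ∀ n : ℕ, Good s 0 (∏ i ∈ Finset.range n, (c - i)) (Qaux c ϑ n) := by
  intro n
  induction n with
  | zero =>
    simpa [Qaux] using Good.const (s := s) 1
  | succ n ih =>
    have g1 : Good s 0 ((c - n) + 0) (fun x => (c - n) + ϑ x) :=
      Good.add hs hmem (Good.const (c - n)) hθ
    have g2 : Good s (0 + 0) (((c - n) + 0) * ∏ i ∈ Finset.range n, (c - i))
        (fun x => ((c - n) + ϑ x) * Qaux c ϑ n x) := Good.mul hs hmem g1 ih
    have g3 : Good s 0 0 (fun x => x * _root_.deriv (Qaux c ϑ n) x) :=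
      Good.xderiv hs hmem ih
    have g4 := Good.add hs hmem g2 g3
    have : (((c - n) + 0) * (∏ i ∈ Finset.range n, (c - i)) + 0)
        = ∏ i ∈ Finset.range (n+1), (c - i) := by
      rw [Finset.prod_range_succ]; ring
    rw [this] at g4
    simpa [Qaux] using g4

end RVAux

/-- Let `c ∈ (1,2)` and `h(x) = x^c ℓ(x)` on `[x₀, ∞)` with
`ℓ(x) = exp(∫_{x₀}^x ϑ(t)/t dt)` for a smooth `ϑ` with `ϑ(x) → 0` and
`xⁿ ϑ⁽ⁿ⁾(x) → 0` for all `n ≥ 1`. Then for every `n ≥ 1`,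
`xⁿ h⁽ⁿ⁾(x)/h(x) → c(c-1)⋯(c-n+1)` as `x → ∞`. -/
theorem deriv_asymptotics_of_regularly_varying (x₀ c : ℝ) (hx₀ : 1 ≤ x₀)
    (hc1 : 1 < c) (hc2 : c < 2)
    (ϑ : ℝ → ℝ) (hϑ : ContDiffOn ℝ (⊤ : ℕ∞) ϑ (Set.Ici x₀))
    (hϑ0 : Tendsto ϑ atTop (nhds 0))
    (hϑn : ∀ n : ℕ, 1 ≤ n →
      Tendsto (fun x => x ^ n * iteratedDeriv n ϑ x) atTop (nhds 0))
    (h : ℝ → ℝ)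
    (hh : ∀ x, x₀ ≤ x → h x = x ^ c * Real.exp (∫ t in x₀..x, ϑ t / t)) :
    ∀ n : ℕ, 1 ≤ n →
      Tendsto (fun x => x ^ n * iteratedDeriv n h x / h x) atTop
        (nhds (∏ i ∈ Finset.range n, (c - i))) := by
  classical
  set s : Set ℝ := Set.Ioi x₀ with hs_def
  have hs : IsOpen s := isOpen_Ioi
  have hmem : ∀ᶠ x in atTop, x ∈ s := eventually_gt_atTop x₀
  have hthsm : ContDiffOn ℝ ∞ ϑ s := (hϑ.of_le (by simp)).mono Set.Ioi_subset_Ici_self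
  have hpos : ∀ x ∈ s, (0:ℝ) < x := fun x hx => lt_of_lt_of_le one_pos (hx₀.trans hx.le)
  have hθgood : RVAux.Good s 0 0 ϑ := by
    refine ⟨hthsm, fun k => ?_⟩
    rcases Nat.eq_zero_or_pos k with rfl | hk
    · simpa [iteratedDeriv_zero] using hϑ0
    · have := hϑn k hk
      simp only [if_neg hk.ne', Nat.add_zero]
      exact this
  set I : ℝ → ℝ := fun x => ∫ t in x₀..x, ϑ t / t with hI_def
  have hθcont : ContinuousOn (fun t => ϑ t / t) (Set.Ici x₀) :=
    (hϑ.continuousOn).div continuousOn_id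
      (fun t ht => (lt_of_lt_of_le one_pos (hx₀.trans ht)).ne')
  have hIderiv : ∀ x ∈ s, HasDerivAt I (ϑ x / x) x := by
    intro x hx
    refine intervalIntegral.integral_hasDerivAt_right ?_ ?_ ?_
    · apply ContinuousOn.intervalIntegrable
      apply hθcont.mono
      rw [Set.uIcc_of_le (le_of_lt hx)]
      exact Set.Icc_subset_Ici_self
    · exact ⟨Set.Ici x₀, Ici_mem_nhds hx, hθcont.aestronglyMeasurable measurableSet_Ici⟩
    · exact hθcont.continuousAt (Ici_mem_nhds hx)
  set H : ℝ → ℝ := fun x => x ^ c * Real.exp (I x) with hH_def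
  have hHpos : ∀ x ∈ s, (0:ℝ) < H x := fun x hx =>
    mul_pos (Real.rpow_pos_of_pos (hpos x hx) c) (Real.exp_pos _)
  have hHderiv : ∀ x ∈ s, HasDerivAt H (H x * (c + ϑ x) / x) x := by
    intro x hx
    have hx0 := hpos x hx
    have hp : HasDerivAt (fun y : ℝ => y ^ c) (c * x ^ (c - 1)) x :=
      Real.hasDerivAt_rpow_const (Or.inl hx0.ne')
    have he : HasDerivAt (fun y => Real.exp (I y)) (Real.exp (I x) * (ϑ x / x)) x :=
      (hIderiv x hx).exp
    have := hp.fun_mul he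
    convert this using 1
    case e'_4 => rfl
    case e'_5 => rfl
    have h1 : x ^ (c - 1) = x ^ c / x := by
      rw [Real.rpow_sub hx0, Real.rpow_one]
    rw [hH_def, h1]
    field_simp
  have hIsm : ContDiffOn ℝ ∞ I s := by
    rw [contDiffOn_infty_iff_deriv_of_isOpen hs]
    refine ⟨fun x hx => (hIderiv x hx).differentiableAt.differentiableWithinAt, ?_⟩
    refine ContDiffOn.congr ((hthsm.div (contDiffOn_id) (fun x hx => (hpos x hx).ne'))) ?_
    intro x hx
    exact (hIderiv x hx).deriv
  have hHsm : ContDiffOn ℝ ∞ H s := by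
    apply ContDiffOn.mul
    · intro x hx
      exact (Real.contDiffAt_rpow_const_of_ne (hpos x hx).ne').contDiffWithinAt
    · exact hIsm.exp
  have hQgood := RVAux.Qgood (c := c) hs hmem hθgood
  have claimB : ∀ n : ℕ, ∀ x ∈ s,
      iteratedDeriv n H x = H x * RVAux.Qaux c ϑ n x * x ^ (-(n:ℝ)) := by
    intro n
    induction n with
    | zero =>
      intro x hx
      simp [RVAux.Qaux, iteratedDeriv_zero]
    | succ n ih =>
      intro x hx
      have hx0 := hpos x hx
      rw [iteratedDeriv_succ]
      have hev : iteratedDeriv n H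
          =ᶠ[nhds x] fun y => H y * RVAux.Qaux c ϑ n y * y ^ (-(n:ℝ)) := by
        filter_upwards [hs.mem_nhds hx] with y hy using ih y hy
      rw [hev.deriv_eq]
      have hQd : HasDerivAt (RVAux.Qaux c ϑ n) (deriv (RVAux.Qaux c ϑ n) x) x :=
        (RVAux.diffAt hs (hQgood n).1 hx).hasDerivAt
      have hpw : HasDerivAt (fun y : ℝ => y ^ (-(n:ℝ))) ((-(n:ℝ)) * x ^ (-(n:ℝ) - 1)) x :=
        Real.hasDerivAt_rpow_const (Or.inl hx0.ne')
      have hd := ((hHderiv x hx).fun_mul hQd).fun_mul hpw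
      rw [hd.deriv]
      have h1 : x ^ (-(n:ℝ) - 1) = x ^ (-(n:ℝ)) / x := by
        rw [Real.rpow_sub hx0, Real.rpow_one]
      have h2 : x ^ (-((n:ℕ)+1:ℕ):ℝ) = x ^ (-(n:ℝ)) / x := by
        rw [show (-((n:ℕ)+1:ℕ):ℝ) = -(n:ℝ) - 1 by push_cast; ring, h1]
      rw [h1, h2]
      show _ = H x * RVAux.Qaux c ϑ (n+1) x * (x ^ (-(n:ℝ)) / x)
      simp only [RVAux.Qaux]
      field_simp
      ring
  -- final assembly
  intro n hn
  have hQlim : Tendsto (RVAux.Qaux c ϑ n) atTop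
      (nhds (∏ i ∈ Finset.range n, (c - i))) := by
    have := (hQgood n).2 0
    simpa [iteratedDeriv_zero] using this
  refine hQlim.congr' ?_
  have hEq : Set.EqOn h H s := fun y hy => hh y (le_of_lt hy)
  filter_upwards [hmem] with x hx
  have hx0 := hpos x hx
  have hiter : iteratedDeriv n h x = iteratedDeriv n H x :=
    hEq.iteratedDeriv_of_isOpen hs n hx
  rw [hiter, hEq hx, claimB n x hx]
  have hxn : (x : ℝ) ^ (n:ℕ) * x ^ (-(n:ℝ)) = 1 := by
    rw [← Real.rpow_natCast x n, ← Real.rpow_add hx0]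
    simp
  have hHne := (hHpos x hx).ne'
  field_simp
  linear_combination (-RVAux.Qaux c ϑ n x) * hxn
end

section
/- For every $M \ge 2$ there exist complex coefficients $(b_m)_{m \in \mathbb{Z}}$ such that $\min\{1, (M\|t\|)^{-1}\} = \sum_{m \in \mathbb{Z}} b_m e^{2\pi i m t}$ for all real $t$, with $|b_m| \le C \min\{ M^{-1}\log M,\; |m|^{-1},\; M|m|^{-2} \}$ for all $m \ne 0$ and $|b_0| \le C M^{-1} \log M$, for an absolute constant $C$. -/
open Real MeasureTheory intervalIntegral Set

namespace MinInv

noncomputable def g (M t : ℝ) : ℝ := (max 1 (M * |t|))⁻¹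

lemma one_le_max (M t : ℝ) : 1 ≤ max 1 (M * |t|) := le_max_left _ _

lemma max_pos (M t : ℝ) : 0 < max 1 (M * |t|) := lt_of_lt_of_le one_pos (one_le_max M t)

lemma g_cont (M : ℝ) : Continuous (g M) :=
  (continuous_const.max (continuous_const.mul (continuous_abs))).inv₀
    fun t => (max_pos M t).ne'

lemma g_nonneg (M t : ℝ) : 0 ≤ g M t := inv_nonneg.2 (max_pos M t).le

lemma g_even (M t : ℝ) : g M (-t) = g M t := by simp [g]

lemma integral_even {h : ℝ → ℝ} (hc : Continuous h) (he : ∀ x, h (-x) = h x) (c : ℝ) :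
    ∫ x in (-c)..c, h x = 2 * ∫ x in (0:ℝ)..c, h x := by
  have h1 : (∫ x in (0:ℝ)..c, h (-x)) = ∫ x in (-c)..(0:ℝ), h x := by
    simpa using intervalIntegral.integral_comp_neg (a := 0) (b := c) h
  have h2 : (∫ x in (0:ℝ)..c, h (-x)) = ∫ x in (0:ℝ)..c, h x := by
    simp only [he]
  rw [← intervalIntegral.integral_add_adjacent_intervals
      (hc.intervalIntegrable (-c) 0) (hc.intervalIntegrable 0 c), ← h1, h2]
  ring

lemma integral_odd {h : ℝ → ℝ} (hc : Continuous h) (he : ∀ x, h (-x) = -h x) (c : ℝ) :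
    ∫ x in (-c)..c, h x = 0 := by
  have h1 : (∫ x in (0:ℝ)..c, h (-x)) = ∫ x in (-c)..(0:ℝ), h x := by
    simpa using intervalIntegral.integral_comp_neg (a := 0) (b := c) h
  have h2 : (∫ x in (0:ℝ)..c, h (-x)) = -∫ x in (0:ℝ)..c, h x := by
    simp only [he, intervalIntegral.integral_neg]
  rw [← intervalIntegral.integral_add_adjacent_intervals
      (hc.intervalIntegrable (-c) 0) (hc.intervalIntegrable 0 c), ← h1, h2]
  ring

variable {M : ℝ} {m : ℤ}

lemma key (hM : 2 ≤ M) (hm : m ≠ 0) :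
    ∫ t in (0:ℝ)..(1/2), g M t * Real.cos (2*π*m*t)
      = (M * (2*π*m))⁻¹ * ∫ t in M⁻¹..(1/2), Real.sin (2*π*m*t) / t^2 := by
  have hM0 : (0:ℝ) < M := lt_of_lt_of_le two_pos hM
  have haM : (0:ℝ) < M⁻¹ := inv_pos.2 hM0
  have ha2 : M⁻¹ ≤ 1/2 := by
    rw [inv_le_comm₀ hM0 (by norm_num)]; linarith
  set ω : ℝ := 2*π*m with hω_def
  have hmR : (m:ℝ) ≠ 0 := Int.cast_ne_zero.2 hm
  have hω : ω ≠ 0 := by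
    simp only [hω_def]
    positivity
  -- derivative fact
  have hv : ∀ t : ℝ, HasDerivAt (fun t => Real.sin (ω*t)/ω) (Real.cos (ω*t)) t := by
    intro t
    have h1 : HasDerivAt (fun x : ℝ => ω * x) ω t := by
      simpa using (hasDerivAt_id t).const_mul ω
    have h := ((Real.hasDerivAt_sin (ω*t)).comp t h1).div_const ω
    exact h.congr_deriv (by simp [hω])
  -- piece 1
  have hp1 : ∫ t in (0:ℝ)..M⁻¹, g M t * Real.cos (ω*t) = Real.sin (ω * M⁻¹)/ω := by
    have h1 : EqOn (fun t => g M t * Real.cos (ω*t)) (fun t => Real.cos (ω*t))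
        (Set.uIcc (0:ℝ) M⁻¹) := by
      intro t ht
      rw [Set.uIcc_of_le haM.le] at ht
      have h0 : |t| = t := abs_of_nonneg ht.1
      have hle : M * |t| ≤ 1 := by
        rw [h0]
        calc M * t ≤ M * M⁻¹ := mul_le_mul_of_nonneg_left ht.2 hM0.le
          _ = 1 := mul_inv_cancel₀ hM0.ne'
      simp [g, max_eq_left hle]
    rw [intervalIntegral.integral_congr h1,
      intervalIntegral.integral_eq_sub_of_hasDerivAt (fun t _ => hv t)
        ((Real.continuous_cos.comp (continuous_const.mul continuous_id)).intervalIntegrable _ _)]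
    simp
  -- piece 2 : IBP
  have hIcc : Set.uIcc M⁻¹ (1/2:ℝ) = Set.Icc M⁻¹ (1/2:ℝ) := Set.uIcc_of_le ha2
  have htpos : ∀ t ∈ Set.uIcc M⁻¹ (1/2:ℝ), 0 < t := by
    intro t ht; rw [hIcc] at ht; exact lt_of_lt_of_le haM ht.1
  have hu : ∀ t ∈ Set.uIcc M⁻¹ (1/2:ℝ),
      HasDerivAt (fun t => (M*t)⁻¹) (-(M*1)/(M*t)^2) t := by
    intro t ht
    have h0 := htpos t ht
    exact ((hasDerivAt_id t).const_mul M).inv (by positivity)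
  have hu'int : IntervalIntegrable (fun t => -(M*1)/(M*t)^2) volume M⁻¹ (1/2) := by
    apply ContinuousOn.intervalIntegrable
    apply ContinuousOn.div continuousOn_const
    · exact ((continuousOn_const.mul continuousOn_id).pow 2)
    · intro t ht
      have h0 := htpos t ht
      positivity
  have hv'int : IntervalIntegrable (fun t => Real.cos (ω*t)) volume M⁻¹ (1/2) :=
    ((Real.continuous_cos.comp (continuous_const.mul continuous_id)).intervalIntegrable _ _)
  have hibp := intervalIntegral.integral_mul_deriv_eq_deriv_mul hu
    (fun t _ => hv t) hu'int
    (((Real.continuous_cos.comp (continuous_const.mul continuous_id)).intervalIntegrable _ _))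
  -- rewrite piece 2 integrand as u * v'
  have hp2congr : EqOn (fun t => g M t * Real.cos (ω*t)) (fun t => (M*t)⁻¹ * Real.cos (ω*t))
      (Set.uIcc M⁻¹ (1/2:ℝ)) := by
    intro t ht
    have h0 := htpos t ht
    rw [hIcc] at ht
    have h0' : |t| = t := abs_of_nonneg h0.le
    have hge : 1 ≤ M * |t| := by
      rw [h0']
      calc (1:ℝ) = M * M⁻¹ := (mul_inv_cancel₀ hM0.ne').symm
        _ ≤ M * t := mul_le_mul_of_nonneg_left ht.1 hM0.le
    have hge' : 1 ≤ M * t := by rwa [h0'] at hge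
    simp only [g, h0', max_eq_right hge']
  have hsin0 : Real.sin (ω * (1/2)) = 0 := by
    have : ω * (1/2) = (m:ℝ) * π := by rw [hω_def]; ring
    rw [this]
    exact Real.sin_int_mul_pi m
  have hlast : -∫ t in M⁻¹..(1/2), (-(M*1)/(M*t)^2) * (Real.sin (ω*t)/ω)
      = (M*ω)⁻¹ * ∫ t in M⁻¹..(1/2), Real.sin (ω*t) / t^2 := by
    rw [← intervalIntegral.integral_neg, ← intervalIntegral.integral_const_mul]
    apply intervalIntegral.integral_congr
    intro t ht
    have h0 := htpos t ht
    field_simp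
  have hp2 : ∫ t in M⁻¹..(1/2), g M t * Real.cos (ω*t)
      = -(Real.sin (ω * M⁻¹)/ω) + (M*ω)⁻¹ * ∫ t in M⁻¹..(1/2), Real.sin (ω*t) / t^2 := by
    rw [intervalIntegral.integral_congr hp2congr, hibp, hsin0, ← hlast,
      mul_inv_cancel₀ hM0.ne']
    simp
    ring
  -- combine
  have hcont : Continuous fun t : ℝ => g M t * Real.cos (ω*t) := (g_cont M).mul (by fun_prop)
  rw [← intervalIntegral.integral_add_adjacent_intervals
      (hcont.intervalIntegrable 0 M⁻¹) (hcont.intervalIntegrable M⁻¹ (1/2)), hp1, hp2]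
  ring

lemma J_bound1 (hM : 2 ≤ M) :
    |∫ t in M⁻¹..(1/2), Real.sin (2*π*m*t) / t^2| ≤ M := by
  have hM0 : (0:ℝ) < M := lt_of_lt_of_le two_pos hM
  have haM : (0:ℝ) < M⁻¹ := inv_pos.2 hM0
  have ha2 : M⁻¹ ≤ 1/2 := by rw [inv_le_comm₀ hM0 (by norm_num)]; linarith
  have hIcc : Set.uIcc M⁻¹ (1/2:ℝ) = Set.Icc M⁻¹ (1/2:ℝ) := Set.uIcc_of_le ha2
  have h0mem : (0:ℝ) ∉ Set.uIcc M⁻¹ (1/2:ℝ) := by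
    rw [hIcc]; intro h; exact absurd h.1 (by linarith)
  have hint1 : IntervalIntegrable (fun t : ℝ => |Real.sin (2*π*m*t) / t^2|) volume M⁻¹ (1/2) := by
    apply ContinuousOn.intervalIntegrable
    apply ContinuousOn.abs
    apply ContinuousOn.div (by fun_prop) (by fun_prop)
    intro t ht
    have : 0 < t := lt_of_lt_of_le haM (by rw [hIcc] at ht; exact ht.1)
    positivity
  have hint2 : IntervalIntegrable (fun t : ℝ => t^(-2:ℤ)) volume M⁻¹ (1/2) := by
    apply ContinuousOn.intervalIntegrable
    apply ContinuousOn.zpow₀ continuousOn_id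
    intro t ht
    left
    have : 0 < t := lt_of_lt_of_le haM (by rw [hIcc] at ht; exact ht.1)
    exact this.ne'
  calc |∫ t in M⁻¹..(1/2), Real.sin (2*π*m*t) / t^2|
      ≤ ∫ t in M⁻¹..(1/2), |Real.sin (2*π*m*t) / t^2| := by
        have h := intervalIntegral.norm_integral_le_integral_norm
          (f := fun t : ℝ => Real.sin (2*π*m*t) / t^2) (μ := volume) ha2
        simpa only [Real.norm_eq_abs] using h
    _ ≤ ∫ t in M⁻¹..(1/2), t^(-2:ℤ) := by
        apply intervalIntegral.integral_mono_on ha2 hint1 hint2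
        intro t ht
        have ht0 : 0 < t := lt_of_lt_of_le haM ht.1
        rw [abs_div, abs_of_nonneg (by positivity : (0:ℝ) ≤ t^2), zpow_neg]
        rw [div_le_iff₀ (by positivity)]
        calc |Real.sin (2*π*m*t)| ≤ 1 := Real.abs_sin_le_one _
          _ = (t^(2:ℤ))⁻¹ * t^2 := by
              rw [zpow_two]; field_simp
    _ = ((1/2:ℝ)^(-2+1:ℤ) - (M⁻¹)^(-2+1:ℤ))/((-2:ℤ)+1) := by
        rw [integral_zpow (Or.inr ⟨by norm_num, h0mem⟩)]
    _ ≤ M := by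
        norm_num
        linarith

lemma J_bound2 (hM : 2 ≤ M) (hm : m ≠ 0) :
    |∫ t in M⁻¹..(1/2), Real.sin (2*π*m*t) / t^2| ≤ 2*M^2/|2*π*m| := by
  have hM0 : (0:ℝ) < M := lt_of_lt_of_le two_pos hM
  have haM : (0:ℝ) < M⁻¹ := inv_pos.2 hM0
  have ha2 : M⁻¹ ≤ 1/2 := by rw [inv_le_comm₀ hM0 (by norm_num)]; linarith
  have hIcc : Set.uIcc M⁻¹ (1/2:ℝ) = Set.Icc M⁻¹ (1/2:ℝ) := Set.uIcc_of_le ha2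
  have h0mem : (0:ℝ) ∉ Set.uIcc M⁻¹ (1/2:ℝ) := by
    rw [hIcc]; intro h; exact absurd h.1 (by linarith)
  set ω : ℝ := 2*π*m with hω_def
  have hmR : (m:ℝ) ≠ 0 := Int.cast_ne_zero.2 hm
  have hω : ω ≠ 0 := by simp only [hω_def]; positivity
  have hωa : 0 < |ω| := abs_pos.2 hω
  have hu : ∀ t ∈ Set.uIcc M⁻¹ (1/2:ℝ),
      HasDerivAt (fun t : ℝ => (t^2)⁻¹) (-(2*t^1)/(t^2)^2) t := by
    intro t ht
    have ht0 : 0 < t := lt_of_lt_of_le haM (by rw [hIcc] at ht; exact ht.1)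
    have := (hasDerivAt_pow 2 t).inv (by positivity)
    exact this.congr_deriv (by norm_num)
  have hv : ∀ t : ℝ, HasDerivAt (fun t => -(Real.cos (ω*t)/ω)) (Real.sin (ω*t)) t := by
    intro t
    have h1 : HasDerivAt (fun x : ℝ => ω * x) ω t := by
      simpa using (hasDerivAt_id t).const_mul ω
    have h := (((Real.hasDerivAt_cos (ω*t)).comp t h1).div_const ω).neg
    exact h.congr_deriv (by rw [mul_div_cancel_right₀ _ hω, neg_neg])
  have hu'int : IntervalIntegrable (fun t : ℝ => -(2*t^1)/(t^2)^2) volume M⁻¹ (1/2) := by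
    apply ContinuousOn.intervalIntegrable
    apply ContinuousOn.div (by fun_prop) (by fun_prop)
    intro t ht
    have : 0 < t := lt_of_lt_of_le haM (by rw [hIcc] at ht; exact ht.1)
    positivity
  have hibp := intervalIntegral.integral_mul_deriv_eq_deriv_mul hu (fun t _ => hv t) hu'int
    ((Real.continuous_sin.comp (continuous_const.mul continuous_id)).intervalIntegrable _ _)
  have hcong : EqOn (fun t : ℝ => Real.sin (ω*t) / t^2) (fun t : ℝ => (t^2)⁻¹ * Real.sin (ω*t))
      (Set.uIcc M⁻¹ (1/2:ℝ)) := by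
    intro t ht
    simp [div_eq_inv_mul]
  have h3 : |∫ t in M⁻¹..(1/2), (-(2*t^1)/(t^2)^2) * (-(Real.cos (ω*t)/ω))| ≤ (M^2-4)/|ω| := by
    have hint1 : IntervalIntegrable
        (fun t : ℝ => |(-(2*t^1)/(t^2)^2) * (-(Real.cos (ω*t)/ω))|) volume M⁻¹ (1/2) := by
      apply ContinuousOn.intervalIntegrable
      apply ContinuousOn.abs
      apply ContinuousOn.mul
      · apply ContinuousOn.div (by fun_prop) (by fun_prop)
        intro t ht
        have : 0 < t := lt_of_lt_of_le haM (by rw [hIcc] at ht; exact ht.1)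
        positivity
      · fun_prop
    have hint2 : IntervalIntegrable (fun t : ℝ => 2/|ω| * t^(-3:ℤ)) volume M⁻¹ (1/2) := by
      apply ContinuousOn.intervalIntegrable
      apply ContinuousOn.mul continuousOn_const
      apply ContinuousOn.zpow₀ continuousOn_id
      intro t ht
      left
      have : 0 < t := lt_of_lt_of_le haM (by rw [hIcc] at ht; exact ht.1)
      exact this.ne'
    have e1 : ((1/2:ℝ)^(-3+1:ℤ) - (M⁻¹)^(-3+1:ℤ))/(((-3:ℤ):ℝ)+1) = (M^2-4)/2 := by
      norm_num [zpow_neg]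
      ring
    calc |∫ t in M⁻¹..(1/2), (-(2*t^1)/(t^2)^2) * (-(Real.cos (ω*t)/ω))|
        ≤ ∫ t in M⁻¹..(1/2), |(-(2*t^1)/(t^2)^2) * (-(Real.cos (ω*t)/ω))| := by
          have h := intervalIntegral.norm_integral_le_integral_norm
            (f := fun t : ℝ => (-(2*t^1)/(t^2)^2) * (-(Real.cos (ω*t)/ω))) (μ := volume) ha2
          simpa only [Real.norm_eq_abs] using h
      _ ≤ ∫ t in M⁻¹..(1/2), 2/|ω| * t^(-3:ℤ) := by
          apply intervalIntegral.integral_mono_on ha2 hint1 hint2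
          intro t ht
          have ht0 : 0 < t := lt_of_lt_of_le haM ht.1
          rw [abs_mul, abs_div, abs_neg, abs_neg, abs_div,
            abs_of_nonneg (by positivity : (0:ℝ) ≤ 2*t^1),
            abs_of_nonneg (by positivity : (0:ℝ) ≤ (t^2)^2)]
          calc 2*t^1/(t^2)^2 * (|Real.cos (ω*t)|/|ω|)
              ≤ 2*t^1/(t^2)^2 * (1/|ω|) := by
                apply mul_le_mul_of_nonneg_left _ (by positivity)
                gcongr
                exact Real.abs_cos_le_one _
            _ = 2/|ω| * t^(-3:ℤ) := by
                rw [zpow_neg, show (3:ℤ) = ((3:ℕ):ℤ) from rfl, zpow_natCast]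
                field_simp
      _ = 2/|ω| * (((1/2:ℝ)^(-3+1:ℤ) - (M⁻¹)^(-3+1:ℤ))/(((-3:ℤ):ℝ)+1)) := by
          rw [intervalIntegral.integral_const_mul, integral_zpow (Or.inr ⟨by norm_num, h0mem⟩)]
      _ = (M^2-4)/|ω| := by
          rw [e1]; field_simp
  -- assemble
  have hA : |((1/2:ℝ)^2)⁻¹ * -(Real.cos (ω*(1/2))/ω)| ≤ 4/|ω| := by
    rw [abs_mul, abs_neg, abs_div]
    have h4 : |((1/2:ℝ)^2)⁻¹| = 4 := by norm_num
    rw [h4]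
    calc 4 * (|Real.cos (ω*(1/2))|/|ω|) ≤ 4 * (1/|ω|) := by
          gcongr; exact Real.abs_cos_le_one _
      _ = 4/|ω| := by ring
  have hB : |((M⁻¹:ℝ)^2)⁻¹ * -(Real.cos (ω*M⁻¹)/ω)| ≤ M^2/|ω| := by
    rw [abs_mul, abs_neg, abs_div]
    have h4 : |((M⁻¹:ℝ)^2)⁻¹| = M^2 := by
      rw [← inv_pow, inv_inv, abs_of_nonneg (by positivity)]
    rw [h4]
    calc M^2 * (|Real.cos (ω*M⁻¹)|/|ω|) ≤ M^2 * (1/|ω|) := by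
          gcongr; exact Real.abs_cos_le_one _
      _ = M^2/|ω| := by ring
  have hsum : 4/|ω| + M^2/|ω| + (M^2-4)/|ω| = 2*M^2/|ω| := by
    field_simp; ring
  rw [intervalIntegral.integral_congr hcong, hibp]
  calc |((1/2:ℝ)^2)⁻¹ * -(Real.cos (ω*(1/2))/ω) - ((M⁻¹:ℝ)^2)⁻¹ * -(Real.cos (ω*M⁻¹)/ω)
        - ∫ t in M⁻¹..(1/2), (-(2*t^1)/(t^2)^2) * (-(Real.cos (ω*t)/ω))|
      ≤ |((1/2:ℝ)^2)⁻¹ * -(Real.cos (ω*(1/2))/ω) - ((M⁻¹:ℝ)^2)⁻¹ * -(Real.cos (ω*M⁻¹)/ω)|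
        + |∫ t in M⁻¹..(1/2), (-(2*t^1)/(t^2)^2) * (-(Real.cos (ω*t)/ω))| := abs_sub _ _
    _ ≤ |((1/2:ℝ)^2)⁻¹ * -(Real.cos (ω*(1/2))/ω)| + |((M⁻¹:ℝ)^2)⁻¹ * -(Real.cos (ω*M⁻¹)/ω)|
        + |∫ t in M⁻¹..(1/2), (-(2*t^1)/(t^2)^2) * (-(Real.cos (ω*t)/ω))| := by
          have := abs_sub (((1/2:ℝ)^2)⁻¹ * -(Real.cos (ω*(1/2))/ω))
            (((M⁻¹:ℝ)^2)⁻¹ * -(Real.cos (ω*M⁻¹)/ω))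
          linarith
    _ ≤ 2*M^2/|ω| := by linarith

lemma integral_g (hM : 2 ≤ M) :
    ∫ t in (0:ℝ)..(1/2), g M t = M⁻¹ + Real.log (M/2) / M := by
  have hM0 : (0:ℝ) < M := lt_of_lt_of_le two_pos hM
  have haM : (0:ℝ) < M⁻¹ := inv_pos.2 hM0
  have ha2 : M⁻¹ ≤ 1/2 := by rw [inv_le_comm₀ hM0 (by norm_num)]; linarith
  have hIcc : Set.uIcc M⁻¹ (1/2:ℝ) = Set.Icc M⁻¹ (1/2:ℝ) := Set.uIcc_of_le ha2
  have h0mem : (0:ℝ) ∉ Set.uIcc M⁻¹ (1/2:ℝ) := by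
    rw [hIcc]; intro h; exact absurd h.1 (by linarith)
  have hp1 : ∫ t in (0:ℝ)..M⁻¹, g M t = M⁻¹ := by
    have h1 : EqOn (g M) (fun _ => (1:ℝ)) (Set.uIcc (0:ℝ) M⁻¹) := by
      intro t ht
      rw [Set.uIcc_of_le haM.le] at ht
      have h0 : |t| = t := abs_of_nonneg ht.1
      have hle : M * |t| ≤ 1 := by
        rw [h0]
        calc M * t ≤ M * M⁻¹ := mul_le_mul_of_nonneg_left ht.2 hM0.le
          _ = 1 := mul_inv_cancel₀ hM0.ne'
      simp [g, max_eq_left hle]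
    rw [intervalIntegral.integral_congr h1]
    simp
  have hp2 : ∫ t in M⁻¹..(1/2), g M t = M⁻¹ * Real.log (M/2) := by
    have h1 : EqOn (g M) (fun t => M⁻¹ * t⁻¹) (Set.uIcc M⁻¹ (1/2:ℝ)) := by
      intro t ht
      rw [hIcc] at ht
      have ht0 : 0 < t := lt_of_lt_of_le haM ht.1
      have h0 : |t| = t := abs_of_nonneg ht0.le
      have hge : 1 ≤ M * t := by
        calc (1:ℝ) = M * M⁻¹ := (mul_inv_cancel₀ hM0.ne').symm
          _ ≤ M * t := mul_le_mul_of_nonneg_left ht.1 hM0.le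
      simp [g, h0, max_eq_right hge, mul_inv, mul_comm]
    rw [intervalIntegral.integral_congr h1, intervalIntegral.integral_const_mul,
      integral_inv h0mem]
    congr 2
    field_simp
  rw [← intervalIntegral.integral_add_adjacent_intervals
    ((g_cont M).intervalIntegrable 0 M⁻¹) ((g_cont M).intervalIntegrable M⁻¹ (1/2)),
    hp1, hp2]
  field_simp

lemma abs_sub_round_eq_abs {x : ℝ} (hx : x ∈ Set.uIcc (-(1/2):ℝ) (1/2)) :
    |x - round x| = |x| := by
  rw [Set.uIcc_of_le (by norm_num)] at hx
  rcases eq_or_lt_of_le hx.2 with h | h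
  · rw [h]; norm_num [round_eq]
  · have h0 : round x = 0 := by
      rw [round_eq, Int.floor_eq_zero_iff]
      constructor
      · linarith [hx.1]
      · simpa using by linarith
    simp [h0]

noncomputable def fC (M : ℝ) : C(AddCircle (1:ℝ), ℂ) :=
  ⟨fun u => ((max 1 (M * ‖u‖))⁻¹ : ℝ),
    Complex.continuous_ofReal.comp ((continuous_const.max
      (continuous_const.mul continuous_norm)).inv₀
        fun u => lt_of_lt_of_le one_pos (le_max_left _ _) |>.ne')⟩

lemma fC_coe (M : ℝ) (x : ℝ) :
    fC M (x : AddCircle (1:ℝ)) = (((max 1 (M * |x - round x|))⁻¹ : ℝ) : ℂ) := by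
  have : ‖(x : AddCircle (1:ℝ))‖ = |x - round x| := by
    rw [AddCircle.norm_eq]; norm_num
  simp [fC, this]

lemma fC_coe' (M : ℝ) {x : ℝ} (hx : x ∈ Set.uIcc (-(1/2):ℝ) (1/2)) :
    fC M (x : AddCircle (1:ℝ)) = ((g M x : ℝ) : ℂ) := by
  rw [fC_coe, abs_sub_round_eq_abs hx]; rfl

lemma coeff_eq (M : ℝ) (m : ℤ) :
    fourierCoeff (⇑(fC M)) m
      = ((2 * ∫ t in (0:ℝ)..(1/2), g M t * Real.cos (2*π*m*t) : ℝ) : ℂ) := by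
  haveI : Fact ((0:ℝ) < 1) := ⟨one_pos⟩
  have hcc : Continuous fun t : ℝ => g M t * Real.cos (2*π*m*t) := (g_cont M).mul (by fun_prop)
  have hcs : Continuous fun t : ℝ => g M t * Real.sin (2*π*m*t) := (g_cont M).mul (by fun_prop)
  rw [fourierCoeff_eq_intervalIntegral (⇑(fC M)) m (-(1/2))]
  have he : (-(1/2) : ℝ) + 1 = 1/2 := by norm_num
  rw [he]
  have hcong : EqOn (fun x : ℝ => @fourier 1 (-m) (x : AddCircle (1:ℝ)) • (fC M) (x : AddCircle (1:ℝ)))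
      (fun x : ℝ => ((g M x * Real.cos (2*π*m*x) : ℝ) : ℂ)
        - Complex.I * ((g M x * Real.sin (2*π*m*x) : ℝ) : ℂ))
      (Set.uIcc (-(1/2):ℝ) (1/2)) := by
    intro x hx
    simp only
    rw [fC_coe' M hx, fourier_coe_apply, smul_eq_mul]
    have harg : (2 * ↑π * Complex.I * (↑(-m) : ℂ) * (x:ℂ) / ((1:ℝ):ℂ))
        = ((-(2*π*m*x) : ℝ) : ℂ) * Complex.I := by
      push_cast
      ring
    rw [harg, Complex.exp_mul_I, ← Complex.ofReal_cos, ← Complex.ofReal_sin,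
      Real.cos_neg, Real.sin_neg]
    push_cast
    ring
  have hc1 : Continuous fun x : ℝ => ((g M x * Real.cos (2*π*m*x) : ℝ) : ℂ) := by
    exact Complex.continuous_ofReal.comp hcc
  have hc2 : Continuous fun x : ℝ => ((g M x * Real.sin (2*π*m*x) : ℝ) : ℂ) := by
    exact Complex.continuous_ofReal.comp hcs
  rw [intervalIntegral.integral_congr hcong,
    intervalIntegral.integral_sub
      (g := fun x : ℝ => Complex.I * ((g M x * Real.sin (2*π*m*x) : ℝ) : ℂ))
      (hc1.intervalIntegrable _ _)
      ((continuous_const.mul hc2).intervalIntegrable _ _),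
    intervalIntegral.integral_const_mul, intervalIntegral.integral_ofReal,
    intervalIntegral.integral_ofReal,
    integral_even hcc (fun x => by simp [g_even, Real.cos_neg]) (1/2),
    integral_odd hcs (fun x => by simp [g_even, Real.sin_neg]) (1/2)]
  push_cast
  simp

lemma coeff_norm_eq (M : ℝ) (m : ℤ) :
    ‖fourierCoeff (⇑(fC M)) m‖
      = 2 * |∫ t in (0:ℝ)..(1/2), g M t * Real.cos (2*π*m*t)| := by
  rw [coeff_eq, Complex.norm_real, Real.norm_eq_abs, abs_mul]
  norm_num

lemma coeff_log_bound (hM : 2 ≤ M) (m : ℤ) :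
    ‖fourierCoeff (⇑(fC M)) m‖ ≤ 6 * (Real.log M / M) := by
  have hM0 : (0:ℝ) < M := lt_of_lt_of_le two_pos hM
  have hlog2 : (0.6931471803:ℝ) < Real.log 2 := Real.log_two_gt_d9
  have hlogM : Real.log 2 ≤ Real.log M := Real.log_le_log two_pos hM
  have hcc : Continuous fun t : ℝ => g M t * Real.cos (2*π*m*t) := (g_cont M).mul (by fun_prop)
  have h1 : |∫ t in (0:ℝ)..(1/2), g M t * Real.cos (2*π*m*t)|
      ≤ ∫ t in (0:ℝ)..(1/2), g M t := by
    calc |∫ t in (0:ℝ)..(1/2), g M t * Real.cos (2*π*m*t)|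
        ≤ ∫ t in (0:ℝ)..(1/2), |g M t * Real.cos (2*π*m*t)| := by
          have h := intervalIntegral.norm_integral_le_integral_norm
            (f := fun t : ℝ => g M t * Real.cos (2*π*m*t)) (μ := volume)
            (by norm_num : (0:ℝ) ≤ 1/2)
          simpa only [Real.norm_eq_abs] using h
      _ ≤ ∫ t in (0:ℝ)..(1/2), g M t := by
          apply intervalIntegral.integral_mono_on (by norm_num)
            (hcc.abs.intervalIntegrable _ _) ((g_cont M).intervalIntegrable _ _)
          intro t ht
          rw [abs_mul, abs_of_nonneg (g_nonneg M t)]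
          calc g M t * |Real.cos (2*π*m*t)| ≤ g M t * 1 :=
                mul_le_mul_of_nonneg_left (Real.abs_cos_le_one _) (g_nonneg M t)
            _ = g M t := mul_one _
  rw [coeff_norm_eq]
  calc 2 * |∫ t in (0:ℝ)..(1/2), g M t * Real.cos (2*π*m*t)|
      ≤ 2 * (M⁻¹ + Real.log (M/2) / M) := by rw [← integral_g hM]; linarith
    _ ≤ 6 * (Real.log M / M) := by
        rw [Real.log_div hM0.ne' (by norm_num),
          show 2 * (M⁻¹ + (Real.log M - Real.log 2) / M)
            = (2 + 2*(Real.log M - Real.log 2))/M from by field_simp,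
          show (6:ℝ) * (Real.log M / M) = (6 * Real.log M)/M from by ring]
        gcongr
        linarith

lemma coeff_inv_bound (hM : 2 ≤ M) (hm : m ≠ 0) :
    ‖fourierCoeff (⇑(fC M)) m‖ ≤ |(m:ℝ)|⁻¹ := by
  have hM0 : (0:ℝ) < M := lt_of_lt_of_le two_pos hM
  have hmR : (m:ℝ) ≠ 0 := Int.cast_ne_zero.2 hm
  have hma : 0 < |(m:ℝ)| := abs_pos.2 hmR
  have hπ : (0:ℝ) < π := Real.pi_pos
  have hωeq : |2*π*(m:ℝ)| = 2*π*|(m:ℝ)| := by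
    rw [abs_mul, abs_of_pos (by positivity : (0:ℝ) < 2*π)]
  have habs : |(M * (2*π*(m:ℝ)))⁻¹| = (M * (2*π*|(m:ℝ)|))⁻¹ := by
    rw [abs_inv, abs_mul, abs_of_pos hM0, hωeq]
  rw [coeff_norm_eq]
  calc 2 * |∫ t in (0:ℝ)..(1/2), g M t * Real.cos (2*π*m*t)|
      = 2 * ((M * (2*π*|(m:ℝ)|))⁻¹ * |∫ t in M⁻¹..(1/2), Real.sin (2*π*m*t) / t^2|) := by
        rw [key hM hm, abs_mul, habs]
    _ ≤ 2 * ((M * (2*π*|(m:ℝ)|))⁻¹ * M) := by gcongr; exact J_bound1 hM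
    _ = (π*|(m:ℝ)|)⁻¹ := by field_simp
    _ ≤ |(m:ℝ)|⁻¹ := by
        rw [mul_inv]
        calc π⁻¹ * |(m:ℝ)|⁻¹ ≤ 1 * |(m:ℝ)|⁻¹ := by
              apply mul_le_mul_of_nonneg_right _ (by positivity)
              exact inv_le_one_of_one_le₀ (by linarith [Real.pi_gt_three])
          _ = |(m:ℝ)|⁻¹ := one_mul _

lemma coeff_sq_bound (hM : 2 ≤ M) (hm : m ≠ 0) :
    ‖fourierCoeff (⇑(fC M)) m‖ ≤ M / (m:ℝ)^2 := by
  have hM0 : (0:ℝ) < M := lt_of_lt_of_le two_pos hM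
  have hmR : (m:ℝ) ≠ 0 := Int.cast_ne_zero.2 hm
  have hma : 0 < |(m:ℝ)| := abs_pos.2 hmR
  have hπ : (0:ℝ) < π := Real.pi_pos
  have hωeq : |2*π*(m:ℝ)| = 2*π*|(m:ℝ)| := by
    rw [abs_mul, abs_of_pos (by positivity : (0:ℝ) < 2*π)]
  have habs : |(M * (2*π*(m:ℝ)))⁻¹| = (M * (2*π*|(m:ℝ)|))⁻¹ := by
    rw [abs_inv, abs_mul, abs_of_pos hM0, hωeq]
  rw [coeff_norm_eq]
  calc 2 * |∫ t in (0:ℝ)..(1/2), g M t * Real.cos (2*π*m*t)|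
      = 2 * ((M * (2*π*|(m:ℝ)|))⁻¹ * |∫ t in M⁻¹..(1/2), Real.sin (2*π*m*t) / t^2|) := by
        rw [key hM hm, abs_mul, habs]
    _ ≤ 2 * ((M * (2*π*|(m:ℝ)|))⁻¹ * (2*M^2/(2*π*|(m:ℝ)|))) := by
        rw [← hωeq]
        gcongr
        exact J_bound2 hM hm
    _ = M / (π^2 * |(m:ℝ)|^2) := by field_simp
    _ ≤ M / (m:ℝ)^2 := by
        rw [← sq_abs (m:ℝ)]
        apply div_le_div_of_nonneg_left hM0.le (by positivity)
        calc |(m:ℝ)|^2 = 1 * |(m:ℝ)|^2 := (one_mul _).symm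
          _ ≤ π^2 * |(m:ℝ)|^2 := by
              gcongr
              nlinarith [Real.pi_gt_three]

lemma coeff_summable (hM : 2 ≤ M) : Summable (fourierCoeff (⇑(fC M))) := by
  apply Summable.of_norm_bounded_eventually (g := fun m : ℤ => M * (1/(m:ℝ)^2))
    ((summable_one_div_int_pow.mpr one_lt_two).mul_left M)
  rw [Filter.eventually_cofinite]
  apply Set.Finite.subset (Set.finite_singleton (0:ℤ))
  intro m hm
  simp only [Set.mem_setOf_eq] at hm
  simp only [Set.mem_singleton_iff]
  by_contra hne
  exact hm (by rw [mul_one_div]; exact coeff_sq_bound hM hne)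

end MinInv

/-- Fourier expansion of `t ↦ min{1, (M‖t‖)⁻¹}` (written `(max{1, M‖t‖})⁻¹`,
where `‖t‖` is the distance from `t` to the nearest integer): for every `M ≥ 2`
there are coefficients `b_m` with
`min{1, (M‖t‖)⁻¹} = ∑_{m ∈ ℤ} b_m e^{2πimt}` for all real `t`, and
`|b_m| ≤ C min{M⁻¹ log M, |m|⁻¹, M m⁻²}` for `m ≠ 0`, `|b₀| ≤ C M⁻¹ log M`,
for an absolute constant `C`. -/
theorem min_one_inv_fourier_expansion :
    ∃ C : ℝ, 0 < C ∧ ∀ M : ℝ, 2 ≤ M → ∃ b : ℤ → ℂ,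
      (∀ t : ℝ, HasSum
          (fun m : ℤ => b m * Complex.exp (2 * (Real.pi : ℂ) * Complex.I * (m : ℂ) * (t : ℂ)))
          (((max 1 (M * |t - round t|))⁻¹ : ℝ) : ℂ)) ∧
      (∀ m : ℤ, m ≠ 0 →
        ‖b m‖ ≤ C * min (Real.log M / M) (min (|(m : ℝ)|⁻¹) (M / (m : ℝ) ^ 2))) ∧
      ‖b 0‖ ≤ C * (Real.log M / M) := by
  haveI : Fact ((0:ℝ) < 1) := ⟨one_pos⟩
  refine ⟨6, by norm_num, fun M hM => ?_⟩
  refine ⟨fun m => fourierCoeff (⇑(MinInv.fC M)) m, ?_, ?_, ?_⟩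
  · intro t
    have h := has_pointwise_sum_fourier_series_of_summable
      (MinInv.coeff_summable hM) ((t : ℝ) : AddCircle (1:ℝ))
    have h2 : (fun i : ℤ => fourierCoeff (⇑(MinInv.fC M)) i • fourier i ((t:ℝ) : AddCircle (1:ℝ)))
        = fun m : ℤ => fourierCoeff (⇑(MinInv.fC M)) m
            * Complex.exp (2 * (Real.pi : ℂ) * Complex.I * (m : ℂ) * (t : ℂ)) := by
      funext i
      rw [smul_eq_mul, fourier_coe_apply]
      norm_num
    rw [h2, MinInv.fC_coe M t] at h
    exact h
  · intro m hm
    rw [show (6:ℝ) * min (Real.log M / M) (min (|(m:ℝ)|⁻¹) (M/(m:ℝ)^2))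
        = min (6*(Real.log M/M)) (min (6*|(m:ℝ)|⁻¹) (6*(M/(m:ℝ)^2))) from by
      rw [mul_min_of_nonneg _ _ (by norm_num : (0:ℝ) ≤ 6),
        mul_min_of_nonneg _ _ (by norm_num : (0:ℝ) ≤ 6)]]
    refine le_min (MinInv.coeff_log_bound hM m) (le_min ?_ ?_)
    · have h := MinInv.coeff_inv_bound hM hm
      have h0 : 0 ≤ |(m:ℝ)|⁻¹ := by positivity
      linarith
    · have h := MinInv.coeff_sq_bound hM hm
      have h0 : 0 ≤ M/(m:ℝ)^2 := by positivity
      linarith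
  · exact MinInv.coeff_log_bound hM 0
end

section
/- Let $S \subseteq \mathbb{N}$, $\Omega : \mathbb{Z} \to \mathbb{Z}$, and for $i = 1, 2$ let $w_i : [0,\infty) \to [0,\infty)$, $W_i(n) = \sum_{k \in S \cap [1,n]} w_i(k)$, and define for nonnegative finitely supported $f : \mathbb{Z} \to [0,\infty)$ the maximal functions $\mathcal{M}_i^\star f(x) = \sup_{N \in Z} \frac{1}{W_i(N)} \sum_{k \in S \cap [1,N]} w_i(k) f(x - \Omega(k))$ over a set $Z \subseteq \mathbb{N}$ of indices on which $W_i(N) > 0$. If the sequence $(w_2(n)/w_1(n))_{n \in \mathbb{N}}$ is increasing and $\sup_{n \in \mathbb{N}} \frac{w_2(n) W_1(n)}{w_1(n) W_2(n)} = C < \infty$, then $\mathcal{M}_2^\star f(x) \le (1 + 2C)\, \mathcal{M}_1^\star f(x)$ for every $x \in \mathbb{Z}$. -/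
open Finset

/-- Comparison of weighted maximal functions (increasing-ratio case): with
`S ⊆ ℕ`, `Ω : ℤ → ℤ`, nonnegative weights `w₁, w₂` on `[0, ∞)` with `w₁ > 0`
on `S`, partial sums `Wᵢ(n) = ∑_{k ∈ S ∩ [1,n]} wᵢ(k)`, indices `Z ⊆ ℕ` on
which `Wᵢ(N) > 0`, if `(w₂(n)/w₁(n))ₙ` is increasing and
`sup_n w₂(n)W₁(n)/(w₁(n)W₂(n)) ≤ C`, then for every nonnegative finitely
supported `f` and every `x`, `𝓜₂⋆ f(x) ≤ (1 + 2C) 𝓜₁⋆ f(x)`. -/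
theorem weighted_maximal_comparison_increasing
    (S : Set ℕ) (Ω : ℤ → ℤ) (Z : Set ℕ) (w₁ w₂ : ℝ → ℝ) (C : ℝ)
    (hw₁ : ∀ x : ℝ, 0 ≤ x → 0 ≤ w₁ x) (hw₂ : ∀ x : ℝ, 0 ≤ x → 0 ≤ w₂ x)
    (hw₁pos : ∀ n : ℕ, n ∈ S → 0 < w₁ n)
    (hmono : Monotone (fun n : ℕ => w₂ n / w₁ n))
    (hWpos : ∀ N ∈ Z,
      0 < ∑ k ∈ Finset.Icc 1 N, S.indicator (fun k : ℕ => w₁ k) k ∧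
      0 < ∑ k ∈ Finset.Icc 1 N, S.indicator (fun k : ℕ => w₂ k) k)
    (hC : ∀ n : ℕ, 0 < n →
      (w₂ n * ∑ k ∈ Finset.Icc 1 n, S.indicator (fun k : ℕ => w₁ k) k) /
        (w₁ n * ∑ k ∈ Finset.Icc 1 n, S.indicator (fun k : ℕ => w₂ k) k) ≤ C)
    (f : ℤ → ℝ) (hf : ∀ y, 0 ≤ f y) (hfs : (Function.support f).Finite) (x : ℤ) :
    (⨆ N ∈ Z, (∑ k ∈ Finset.Icc 1 N, S.indicator (fun k : ℕ => w₂ k) k)⁻¹ *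
        ∑ k ∈ Finset.Icc 1 N, S.indicator (fun k : ℕ => w₂ k * f (x - Ω k)) k) ≤
      (1 + 2 * C) *
        ⨆ N ∈ Z, (∑ k ∈ Finset.Icc 1 N, S.indicator (fun k : ℕ => w₁ k) k)⁻¹ *
          ∑ k ∈ Finset.Icc 1 N, S.indicator (fun k : ℕ => w₁ k * f (x - Ω k)) k := by
  set W₁ : ℕ → ℝ := fun N => ∑ k ∈ Finset.Icc 1 N, S.indicator (fun k : ℕ => w₁ k) k with hW₁def
  set W₂ : ℕ → ℝ := fun N => ∑ k ∈ Finset.Icc 1 N, S.indicator (fun k : ℕ => w₂ k) k with hW₂def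
  set A₁ : ℕ → ℝ := fun N => ∑ k ∈ Finset.Icc 1 N, S.indicator (fun k : ℕ => w₁ k * f (x - Ω k)) k with hA₁def
  set A₂ : ℕ → ℝ := fun N => ∑ k ∈ Finset.Icc 1 N, S.indicator (fun k : ℕ => w₂ k * f (x - Ω k)) k with hA₂def
  show (⨆ N ∈ Z, (W₂ N)⁻¹ * A₂ N) ≤ (1 + 2 * C) * ⨆ N ∈ Z, (W₁ N)⁻¹ * A₁ N
  -- basic nonnegativity
  have hW₁nn : ∀ N, 0 ≤ W₁ N := fun N =>
    Finset.sum_nonneg fun k _ => Set.indicator_nonneg (fun (n : ℕ) _ => hw₁ n (Nat.cast_nonneg n)) k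
  have hW₂nn : ∀ N, 0 ≤ W₂ N := fun N =>
    Finset.sum_nonneg fun k _ => Set.indicator_nonneg (fun (n : ℕ) _ => hw₂ n (Nat.cast_nonneg n)) k
  have hA₁nn : ∀ N, 0 ≤ A₁ N := fun N =>
    Finset.sum_nonneg fun k _ => Set.indicator_nonneg
      (fun (n : ℕ) _ => mul_nonneg (hw₁ n (Nat.cast_nonneg n)) (hf _)) k
  have hC0 : 0 ≤ C := by
    refine le_trans ?_ (hC 1 one_pos)
    exact div_nonneg (mul_nonneg (hw₂ _ (Nat.cast_nonneg 1)) (hW₁nn 1))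
      (mul_nonneg (hw₁ _ (Nat.cast_nonneg 1)) (hW₂nn 1))
  -- a uniform bound B for f
  obtain ⟨b, hb⟩ := (hfs.image f).bddAbove
  set B : ℝ := max b 0 with hBdef
  have hB0 : 0 ≤ B := le_max_right _ _
  have hfB : ∀ y, f y ≤ B := by
    intro y
    by_cases hy : f y = 0
    · rw [hy]; exact hB0
    · exact le_trans (hb (Set.mem_image_of_mem f hy)) (le_max_left _ _)
  -- the maximal function of w₁ is bounded
  set g₁ : ℕ → ℝ := fun N => ⨆ _ : N ∈ Z, (W₁ N)⁻¹ * A₁ N with hg₁def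
  have hv₁B : ∀ N ∈ Z, (W₁ N)⁻¹ * A₁ N ≤ B := by
    intro N hN
    have hWp := (hWpos N hN).1
    have hA : A₁ N ≤ B * W₁ N := by
      rw [Finset.mul_sum]
      refine Finset.sum_le_sum fun k _ => ?_
      by_cases hk : k ∈ S
      · rw [Set.indicator_of_mem hk, Set.indicator_of_mem hk]
        rw [mul_comm (B : ℝ)]
        exact mul_le_mul_of_nonneg_left (hfB _) (hw₁ k (Nat.cast_nonneg k))
      · rw [Set.indicator_of_notMem hk, Set.indicator_of_notMem hk, mul_zero]
    calc (W₁ N)⁻¹ * A₁ N ≤ (W₁ N)⁻¹ * (B * W₁ N) :=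
          mul_le_mul_of_nonneg_left hA (inv_nonneg.mpr hWp.le)
      _ = B := by have h : W₁ N ≠ 0 := hWp.ne'; field_simp
  have hg₁B : ∀ N, g₁ N ≤ B := by
    intro N
    by_cases hN : N ∈ Z
    · haveI : Nonempty (N ∈ Z) := ⟨hN⟩
      rw [hg₁def]
      simpa [ciSup_const] using hv₁B N hN
    · haveI : IsEmpty (N ∈ Z) := ⟨hN⟩
      simp only [hg₁def]
      rw [Real.iSup_of_isEmpty]
      exact hB0
  have hbdd : BddAbove (Set.range g₁) := ⟨B, by rintro _ ⟨N, rfl⟩; exact hg₁B N⟩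
  have hg₁nn : ∀ N, 0 ≤ g₁ N := by
    intro N
    by_cases hN : N ∈ Z
    · haveI : Nonempty (N ∈ Z) := ⟨hN⟩
      rw [hg₁def]
      simp only [ciSup_const]
      exact mul_nonneg (inv_nonneg.mpr (hW₁nn N)) (hA₁nn N)
    · haveI : IsEmpty (N ∈ Z) := ⟨hN⟩
      simp only [hg₁def]
      rw [Real.iSup_of_isEmpty]
  have hM₁nn : 0 ≤ ⨆ N, g₁ N := le_trans (hg₁nn 0) (le_ciSup hbdd 0)
  have hRHSnn : 0 ≤ (1 + 2 * C) * ⨆ N, g₁ N :=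
    mul_nonneg (by linarith) hM₁nn
  refine Real.iSup_le (fun N => Real.iSup_le (fun hN => ?_) hRHSnn) hRHSnn
  -- main estimate for a fixed N ∈ Z
  obtain ⟨hW₁p, hW₂p⟩ := hWpos N hN
  have hNpos : 0 < N := by
    rcases Nat.eq_zero_or_pos N with h | h
    · exfalso; simp only [hW₁def, h] at hW₁p; simp at hW₁p
    · exact h
  have hA2le : A₂ N ≤ (w₂ N / w₁ N) * A₁ N := by
    rw [Finset.mul_sum]
    refine Finset.sum_le_sum fun k hk => ?_
    rw [Finset.mem_Icc] at hk
    by_cases hkS : k ∈ S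
    · rw [Set.indicator_of_mem hkS, Set.indicator_of_mem hkS]
      have hw₁k : 0 < w₁ k := hw₁pos k hkS
      have hr : w₂ (k : ℕ) / w₁ (k : ℕ) ≤ w₂ (N : ℕ) / w₁ (N : ℕ) := hmono hk.2
      calc w₂ k * f (x - Ω k) = (w₂ k / w₁ k) * (w₁ k * f (x - Ω k)) := by
            field_simp
        _ ≤ (w₂ N / w₁ N) * (w₁ k * f (x - Ω k)) :=
            mul_le_mul_of_nonneg_right hr (mul_nonneg hw₁k.le (hf _))
    · rw [Set.indicator_of_notMem hkS, Set.indicator_of_notMem hkS, mul_zero]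
  have step1 : (W₂ N)⁻¹ * A₂ N ≤ (W₂ N)⁻¹ * ((w₂ N / w₁ N) * A₁ N) :=
    mul_le_mul_of_nonneg_left hA2le (inv_nonneg.mpr hW₂p.le)
  have hv₁M : (W₁ N)⁻¹ * A₁ N ≤ ⨆ N, g₁ N := by
    haveI : Nonempty (N ∈ Z) := ⟨hN⟩
    have : g₁ N = (W₁ N)⁻¹ * A₁ N := by rw [hg₁def]; simp [ciSup_const]
    rw [← this]
    exact le_ciSup hbdd N
  by_cases hw1N : w₁ (N : ℕ) = 0
  · calc (W₂ N)⁻¹ * A₂ N ≤ (W₂ N)⁻¹ * ((w₂ N / w₁ N) * A₁ N) := step1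
      _ = 0 := by rw [hw1N, div_zero, zero_mul, mul_zero]
      _ ≤ _ := hRHSnn
  · have hw1Np : 0 < w₁ (N : ℕ) := lt_of_le_of_ne (hw₁ N (Nat.cast_nonneg N)) (Ne.symm hw1N)
    have key : (W₂ N)⁻¹ * ((w₂ N / w₁ N) * A₁ N)
        = ((w₂ N * W₁ N) / (w₁ N * W₂ N)) * ((W₁ N)⁻¹ * A₁ N) := by
      have h1 : W₁ N ≠ 0 := hW₁p.ne'
      have h2 : W₂ N ≠ 0 := hW₂p.ne'
      field_simp
    calc (W₂ N)⁻¹ * A₂ N ≤ (W₂ N)⁻¹ * ((w₂ N / w₁ N) * A₁ N) := step1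
      _ = ((w₂ N * W₁ N) / (w₁ N * W₂ N)) * ((W₁ N)⁻¹ * A₁ N) := key
      _ ≤ C * ((W₁ N)⁻¹ * A₁ N) :=
          mul_le_mul_of_nonneg_right (hC N hNpos)
            (mul_nonneg (inv_nonneg.mpr (hW₁nn N)) (hA₁nn N))
      _ ≤ C * ⨆ N, g₁ N := mul_le_mul_of_nonneg_left hv₁M hC0
      _ ≤ (1 + 2 * C) * ⨆ N, g₁ N :=
          mul_le_mul_of_nonneg_right (by linarith) hM₁nn
end
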